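/- Let A ∈ ℝ^{n×n} be symmetric, let Q ∈ ℝ^{n×(k+1)} have orthonormal columns, let T = QᵀAQ, let q' ∈ ℝ^n be a unit vector orthogonal to every column of Q, and let β' ∈ ℝ be such that the Lanczos relation A·Q = Q·T + β'·q'·e_{k+1}ᵀ holds, where e_{k+1} is the last standard basis vector of ℝ^{k+1}. Let β₀ > 0, g = β₀·Q·e₁, and suppose λ ∈ ℝ and h ∈ ℝ^{k+1} satisfy (T + λI)·h = −β₀·e₁. Then the vector s = Q·h satisfies ‖(A + λI)·s + g‖ = |β'|·|e_{k+1}ᵀh|. -/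

import Mathlib

open Matrix

noncomputable section

/-- Euclidean 2-norm of a finitely indexed real vector. -/
def enorm2 {ι : Type*} [Fintype ι] (v : ι → ℝ) : ℝ := ‖(WithLp.equiv 2 (ι → ℝ)).symm v‖

lemma enorm2_smul {ι : Type*} [Fintype ι] (c : ℝ) (v : ι → ℝ) :
    enorm2 (c • v) = |c| * enorm2 v := by
  simp [enorm2, WithLp.toLp_smul, norm_smul, Real.norm_eq_abs]

/-- The GLTR residual-norm identity: if `AQ = QT + β' q' e_{k+1}ᵀ` is a Lanczos relation with
`QᵀQ = I`, `T = QᵀAQ`, `q'` a unit vector orthogonal to the columns of `Q`, `g = β₀ Q e₁`,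
and `(T + λI) h = −β₀ e₁`, then `s = Q h` satisfies
`‖(A + λI) s + g‖ = |β'|·|e_{k+1}ᵀ h|`. -/
theorem stmt_4 {n k : ℕ} (A : Matrix (Fin n) (Fin n) ℝ) (hA : A.IsSymm)
    (Q : Matrix (Fin n) (Fin (k + 1)) ℝ) (hQ : Qᵀ * Q = 1)
    (T : Matrix (Fin (k + 1)) (Fin (k + 1)) ℝ) (hT : T = Qᵀ * A * Q)
    (q' : Fin n → ℝ) (hq'norm : enorm2 q' = 1) (hq'orth : Qᵀ.mulVec q' = 0)
    (β' : ℝ)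
    (hLanczos : A * Q = Q * T +
      β' • Matrix.vecMulVec q' (Pi.single (Fin.last k) (1 : ℝ)))
    (β₀ : ℝ) (hβ₀ : 0 < β₀)
    (g : Fin n → ℝ) (hg : g = β₀ • Q.mulVec (Pi.single (0 : Fin (k + 1)) (1 : ℝ) : Fin (k + 1) → ℝ))
    (lam : ℝ) (h : Fin (k + 1) → ℝ)
    (hh : (T + lam • (1 : Matrix (Fin (k + 1)) (Fin (k + 1)) ℝ)).mulVec h =
      -(β₀ • (Pi.single (0 : Fin (k + 1)) (1 : ℝ) : Fin (k + 1) → ℝ)))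
    (s : Fin n → ℝ) (hs : s = Q.mulVec h) :
    enorm2 ((A + lam • (1 : Matrix (Fin n) (Fin n) ℝ)).mulVec s + g) =
      |β'| * |h (Fin.last k)| := by
  have key : (A + lam • (1 : Matrix (Fin n) (Fin n) ℝ)).mulVec s + g
      = (β' * h (Fin.last k)) • q' := by
    subst hs hg
    have h1 : A.mulVec (Q.mulVec h) = (A * Q).mulVec h := by
      rw [Matrix.mulVec_mulVec]
    have h2 : (Q * T).mulVec h = Q.mulVec (T.mulVec h) := by
      rw [Matrix.mulVec_mulVec]
    have h3 : (β' • Matrix.vecMulVec q' (Pi.single (Fin.last k) (1 : ℝ))).mulVec h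
        = (β' * h (Fin.last k)) • q' := by
      ext i
      simp [Matrix.mulVec, Matrix.vecMulVec, dotProduct, Finset.mul_sum,
        Pi.single_apply, mul_comm, mul_assoc, mul_left_comm]
    have hsum : Q.mulVec (T.mulVec h) + lam • Q.mulVec h
        = -(β₀ • Q.mulVec (Pi.single (0 : Fin (k + 1)) (1 : ℝ))) := by
      rw [show Q.mulVec (T.mulVec h) + lam • Q.mulVec h
          = Q.mulVec ((T + lam • (1 : Matrix (Fin (k + 1)) (Fin (k + 1)) ℝ)).mulVec h) by
        rw [Matrix.add_mulVec, Matrix.mulVec_add, Matrix.smul_mulVec, Matrix.one_mulVec,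
          Matrix.mulVec_smul], hh, Matrix.mulVec_neg, Matrix.mulVec_smul]
    have hmain : (A + lam • (1 : Matrix (Fin n) (Fin n) ℝ)).mulVec (Q.mulVec h)
        = Q.mulVec (T.mulVec h) + (β' * h (Fin.last k)) • q' + lam • Q.mulVec h := by
      rw [Matrix.add_mulVec, Matrix.smul_mulVec, Matrix.one_mulVec, h1, hLanczos,
        Matrix.add_mulVec, h2, h3]
    rw [hmain, add_right_comm (Q.mulVec (T.mulVec h)) ((β' * h (Fin.last k)) • q')
      (lam • Q.mulVec h), hsum]
    abel
  rw [key, enorm2_smul, hq'norm, abs_mul, mul_one]
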